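/- arXiv:1207.3410 — 2 statements merged into one kernel-verified Lean document; each statement's English description precedes it below -/
import Mathlib

section
/- For a finite connected subset Ω (#Ω≥2) of a weighted graph, λ₁(Ω) + λ_max(Ω) = 2 if and only if Ω is bipartite as an induced subgraph. -/
/-!
Set `S := D^{-1/2} A D^{-1/2}` on `Ω` (`normAdj`). The substitution `u = D^{1/2} f` turns Dirichlet
eigenfunctions with eigenvalue `λ` into eigenvectors of `S` with eigenvalue `1 - λ`, so
`λ₁ + λ_max = 2` says that the least eigenvalue of `S` is `-ρ`, where `ρ` is the greatest one.

If `Ω` is bipartite, flipping the sign of an eigenvector on one side maps the eigenvalue `σ` to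
`-σ`. Conversely, let `S u = -ρ u`. Entrywise `S |u| ≥ |S u| = ρ |u|`, so `|u|` maximises the
Rayleigh quotient and `S |u| = ρ |u|`; by connectedness `|u| > 0`. Then equality in the triangle
inequality `|∑ S_ij u_j| ≤ ∑ S_ij |u_j|` forces `u_i u_j < 0` whenever `S_ij ≠ 0`, and the sign of
`u` is a bipartition.
-/

open Finset

variable {V : Type*}

noncomputable def deg (μ : V → V → ℝ) (x : V) : ℝ := ∑ᶠ y, μ x y

noncomputable def eSum (μ : V → V → ℝ) (A B : Finset V) : ℝ :=
  ∑ x ∈ A, ∑ y ∈ B, μ x y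

noncomputable def vol (μ : V → V → ℝ) (U : Finset V) : ℝ := ∑ x ∈ U, deg μ x

noncomputable def bdry (μ : V → V → ℝ) (U : Finset V) : ℝ := vol μ U - eSum μ U U

noncomputable def cheeger (μ : V → V → ℝ) (Ω : Finset V) : ℝ :=
  sInf {r : ℝ | ∃ U : Finset V, U.Nonempty ∧ U ⊆ Ω ∧ r = bdry μ U / vol μ U}

noncomputable def dualCheeger (μ : V → V → ℝ) (Ω : Finset V) : ℝ :=
  sSup {r : ℝ | ∃ V₁ V₂ : Finset V, V₁.Nonempty ∧ V₂.Nonempty ∧ Disjoint V₁ V₂ ∧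
    V₁ ⊆ Ω ∧ V₂ ⊆ Ω ∧ r = 2 * eSum μ V₁ V₂ / (vol μ V₁ + vol μ V₂)}

noncomputable def dLap (μ : V → V → ℝ) (Ω : Finset V) (f : V → ℝ) (x : V) : ℝ :=
  f x - (1 / deg μ x) * ∑ y ∈ Ω, μ x y * f y

def IsDirEigfun (μ : V → V → ℝ) (Ω : Finset V) (lam : ℝ) (f : V → ℝ) : Prop :=
  (∃ x ∈ Ω, f x ≠ 0) ∧ (∀ x ∉ Ω, f x = 0) ∧ ∀ x ∈ Ω, dLap μ Ω f x = lam * f x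

def IsDirEig (μ : V → V → ℝ) (Ω : Finset V) (lam : ℝ) : Prop :=
  ∃ f : V → ℝ, IsDirEigfun μ Ω lam f

noncomputable def lam1 (μ : V → V → ℝ) (Ω : Finset V) : ℝ :=
  sInf {l : ℝ | IsDirEig μ Ω l}

noncomputable def lamMax (μ : V → V → ℝ) (Ω : Finset V) : ℝ :=
  sSup {l : ℝ | IsDirEig μ Ω l}

def ConnectedOn (μ : V → V → ℝ) (Ω : Finset V) : Prop :=
  ∀ x ∈ Ω, ∀ y ∈ Ω,
    Relation.ReflTransGen (fun a b => a ∈ Ω ∧ b ∈ Ω ∧ μ a b ≠ 0) x y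

def BipartiteOn (μ : V → V → ℝ) (Ω : Finset V) : Prop :=
  ∃ U₁ U₂ : Finset V, Disjoint U₁ U₂ ∧ (U₁ : Set V) ∪ ↑U₂ = ↑Ω ∧
    (∀ x ∈ U₁, ∀ y ∈ U₁, μ x y = 0) ∧ (∀ x ∈ U₂, ∀ y ∈ U₂, μ x y = 0)

open Module.End WithLp
open scoped RealInnerProductSpace

namespace LinearMap.IsSymmetric

variable {E : Type*} [NormedAddCommGroup E] [InnerProductSpace ℝ E] {T : E →ₗ[ℝ] E} {M : ℝ}

lemma eq_rayleigh_of_hasEigenvector {l : ℝ} {v : E} (hv : HasEigenvector T l v) :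
    l = ⟪T v, v⟫ / ‖v‖ ^ 2 := by
  have hv0 : ‖v‖ ≠ 0 := norm_ne_zero_iff.2 hv.2
  rw [hv.apply_eq_smul, real_inner_smul_left, real_inner_self_eq_norm_sq]
  field_simp

variable [FiniteDimensional ℝ E]

lemma abs_rayleigh_le (v : E) : |⟪T v, v⟫ / ‖v‖ ^ 2| ≤ ‖LinearMap.toContinuousLinearMap T‖ :=
  (LinearMap.toContinuousLinearMap T).rayleighQuotient_le_norm v

lemma bddAbove_rayleigh :
    BddAbove (Set.range fun x : {x : E // x ≠ 0} => ⟪T x, x⟫ / ‖(x : E)‖ ^ 2) :=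
  ⟨_, Set.forall_mem_range.2 fun x => (le_abs_self _).trans (abs_rayleigh_le (x : E))⟩

lemma bddBelow_rayleigh :
    BddBelow (Set.range fun x : {x : E // x ≠ 0} => ⟪T x, x⟫ / ‖(x : E)‖ ^ 2) :=
  ⟨_, Set.forall_mem_range.2 fun x => neg_le_of_abs_le (abs_rayleigh_le (x : E))⟩

lemma isGreatest_hasEigenvalue [Nontrivial E] (hT : T.IsSymmetric) :
    IsGreatest {l | HasEigenvalue T l} (⨆ x : {x : E // x ≠ 0}, ⟪T x, x⟫ / ‖(x : E)‖ ^ 2) := by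
  refine ⟨by simpa using hT.hasEigenvalue_iSup_of_finiteDimensional, fun l hl => ?_⟩
  obtain ⟨v, hv⟩ := hl.exists_hasEigenvector
  rw [eq_rayleigh_of_hasEigenvector hv]
  exact le_ciSup bddAbove_rayleigh (⟨v, hv.2⟩ : {x : E // x ≠ 0})

lemma isLeast_hasEigenvalue [Nontrivial E] (hT : T.IsSymmetric) :
    IsLeast {l | HasEigenvalue T l} (⨅ x : {x : E // x ≠ 0}, ⟪T x, x⟫ / ‖(x : E)‖ ^ 2) := by
  refine ⟨by simpa using hT.hasEigenvalue_iInf_of_finiteDimensional, fun l hl => ?_⟩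
  obtain ⟨v, hv⟩ := hl.exists_hasEigenvector
  rw [eq_rayleigh_of_hasEigenvector hv]
  exact ciInf_le bddBelow_rayleigh (⟨v, hv.2⟩ : {x : E // x ≠ 0})

lemma inner_le_of_isGreatest (hT : T.IsSymmetric) (hM : IsGreatest {l | HasEigenvalue T l} M)
    (v : E) : ⟪T v, v⟫ ≤ M * ‖v‖ ^ 2 := by
  rcases eq_or_ne v 0 with rfl | hv
  · simp
  have : Nontrivial E := ⟨⟨v, 0, hv⟩⟩
  rw [hM.unique (isGreatest_hasEigenvalue hT), ← div_le_iff₀ (by positivity)]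
  exact le_ciSup bddAbove_rayleigh (⟨v, hv⟩ : {x : E // x ≠ 0})

lemma hasEigenvector_of_isGreatest (hT : T.IsSymmetric) (hM : IsGreatest {l | HasEigenvalue T l} M)
    {v : E} (hv : v ≠ 0) (h : M * ‖v‖ ^ 2 ≤ ⟪T v, v⟫) : HasEigenvector T M v := by
  have : Nontrivial E := ⟨⟨v, 0, hv⟩⟩
  have hmax : IsMaxOn (LinearMap.toContinuousLinearMap T).reApplyInnerSelf
      (Metric.sphere 0 ‖v‖) v := by
    intro w hw
    rw [mem_sphere_zero_iff_norm] at hw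
    change ⟪T w, w⟫ ≤ ⟪T v, v⟫
    exact (inner_le_of_isGreatest hT hM w).trans (hw ▸ h)
  have hvec := (ContinuousLinearMap.isSelfAdjoint_iff_isSymmetric.2 hT).hasEigenvector_of_isMaxOn
    hv hmax
  simp only [LinearMap.coe_toContinuousLinearMap] at hvec
  rwa [hM.unique (isGreatest_hasEigenvalue hT)]

end LinearMap.IsSymmetric

namespace Matrix

variable {ι : Type*} [Fintype ι] {S : Matrix ι ι ℝ} {σ : ℝ}

def IsBipartite (S : Matrix ι ι ℝ) : Prop :=
  ∃ U : Set ι, ∀ i j, (i ∈ U ↔ j ∈ U) → S i j = 0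

lemma pos_of_mulVec_eq_smul (hnn : ∀ i j, 0 ≤ S i j)
    (hconn : ∀ i j, Relation.ReflTransGen (fun a b => S a b ≠ 0) i j) {w : ι → ℝ}
    (hw0 : 0 ≤ w) (hw : S *ᵥ w = σ • w) (hne : w ≠ 0) (i : ι) : 0 < w i := by
  have hspread (a b : ι) (hab : S a b ≠ 0) (ha : w a = 0) : w b = 0 := by
    have hsum : ∑ c, S a c * w c = 0 := by
      simpa [mulVec, dotProduct, ha] using congrFun hw a
    have := (Finset.sum_eq_zero_iff_of_nonneg fun c _ => mul_nonneg (hnn a c) (hw0 c)).1 hsum b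
      (Finset.mem_univ b)
    exact (mul_eq_zero.1 this).resolve_left hab
  refine (hw0 i).lt_of_ne fun hi => hne (funext fun j => ?_)
  induction hconn i j with
  | refl => exact hi.symm
  | tail _ hab ih => exact hspread _ _ hab ih

variable [DecidableEq ι]

lemma hasEigenvector_toEuclideanLin_iff {u : ι → ℝ} :
    HasEigenvector (toEuclideanLin S) σ (toLp 2 u) ↔ S *ᵥ u = σ • u ∧ u ≠ 0 := by
  rw [hasEigenvector_iff, mem_eigenspace_iff, Ne, toLp_eq_zero, toLpLin_toLp, toLin'_apply,
    ← toLp_smul, (toLp_injective 2).eq_iff]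

lemma hasEigenvalue_toEuclideanLin_iff :
    HasEigenvalue (toEuclideanLin S) σ ↔ ∃ u ≠ 0, S *ᵥ u = σ • u := by
  refine ⟨fun h => ?_, fun ⟨u, hu, h⟩ =>
    hasEigenvalue_of_hasEigenvector (hasEigenvector_toEuclideanLin_iff.2 ⟨h, hu⟩)⟩
  obtain ⟨v, hv⟩ := h.exists_hasEigenvector
  obtain ⟨hSv, hv0⟩ := hasEigenvector_toEuclideanLin_iff.1 hv
  exact ⟨ofLp v, hv0, hSv⟩

lemma IsHermitian.mulVec_eq_smul_of_isGreatest (hS : S.IsHermitian) {M : ℝ}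
    (hM : IsGreatest {l | HasEigenvalue (toEuclideanLin S) l} M) {u : ι → ℝ} (hu : u ≠ 0)
    (h : M * (u ⬝ᵥ u) ≤ u ⬝ᵥ S *ᵥ u) : S *ᵥ u = M • u := by
  have hinner : ⟪toEuclideanLin S (toLp 2 u), toLp 2 u⟫ = u ⬝ᵥ S *ᵥ u := by
    simp [EuclideanSpace.inner_toLp_toLp]
  have hnorm : ‖(toLp 2 u : EuclideanSpace ℝ ι)‖ ^ 2 = u ⬝ᵥ u := by
    rw [← real_inner_self_eq_norm_sq, EuclideanSpace.inner_toLp_toLp]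
    rfl
  refine (hasEigenvector_toEuclideanLin_iff.1 ?_).1
  refine (isSymmetric_toEuclideanLin_iff.2 hS).hasEigenvector_of_isGreatest hM
    (by simpa using hu) ?_
  rwa [hinner, hnorm]

lemma IsBipartite.hasEigenvalue_neg (hB : S.IsBipartite)
    (h : HasEigenvalue (toEuclideanLin S) σ) : HasEigenvalue (toEuclideanLin S) (-σ) := by
  classical
  obtain ⟨U, hU⟩ := hB
  obtain ⟨u, hu, hSu⟩ := hasEigenvalue_toEuclideanLin_iff.1 h
  set ε : ι → ℝ := fun i => if i ∈ U then 1 else -1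
  have hε0 (i : ι) : ε i ≠ 0 := by by_cases hi : i ∈ U <;> simp [ε, hi]
  have hε (i j : ι) : S i j * ε j = -(ε i * S i j) := by
    by_cases hij : i ∈ U ↔ j ∈ U
    · simp [hU i j hij]
    · by_cases hi : i ∈ U <;> simp_all [ε]
  refine hasEigenvalue_toEuclideanLin_iff.2 ⟨ε * u,
    fun h0 => hu (funext fun i => (mul_eq_zero.1 (congrFun h0 i)).resolve_left (hε0 i)),
    funext fun i => ?_⟩
  have hSu_apply : ∑ j, S i j * u j = σ * u i := congrFun hSu i
  calc ∑ j, S i j * (ε j * u j) = -(ε i * ∑ j, S i j * u j) := by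
        simp only [Finset.mul_sum, ← Finset.sum_neg_distrib]
        exact Finset.sum_congr rfl fun j _ => by rw [← mul_assoc, hε]; ring
    _ = -σ * (ε i * u i) := by rw [hSu_apply]; ring

lemma IsHermitian.isBipartite_of_hasEigenvalue_neg (hS : S.IsHermitian) (hnn : ∀ i j, 0 ≤ S i j)
    (hconn : ∀ i j, Relation.ReflTransGen (fun a b => S a b ≠ 0) i j) {M : ℝ}
    (hM : IsGreatest {l | HasEigenvalue (toEuclideanLin S) l} M)
    (hneg : HasEigenvalue (toEuclideanLin S) (-M)) : S.IsBipartite := by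
  obtain ⟨u, hu, hSu⟩ := hasEigenvalue_toEuclideanLin_iff.1 hneg
  have hSu_apply (i : ι) : ∑ j, S i j * u j = -M * u i := congrFun hSu i
  set w : ι → ℝ := fun i => |u i|
  have hw0 : w ≠ 0 := fun h => hu (funext fun i => abs_eq_zero.1 (congrFun h i))
  have hSw_ge (i : ι) : M * w i ≤ ∑ j, S i j * w j :=
    calc M * w i ≤ |-M * u i| := by rw [abs_mul, abs_neg]; gcongr; exact le_abs_self M
      _ = |∑ j, S i j * u j| := by rw [hSu_apply]
      _ ≤ ∑ j, S i j * w j := (Finset.abs_sum_le_sum_abs _ _).trans_eq <|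
          Finset.sum_congr rfl fun j _ => by rw [abs_mul, abs_of_nonneg (hnn i j)]
  have hSw : S *ᵥ w = M • w := by
    refine hS.mulVec_eq_smul_of_isGreatest hM hw0 ?_
    rw [← smul_eq_mul, ← dotProduct_smul]
    exact Finset.sum_le_sum fun i _ => mul_le_mul_of_nonneg_left (hSw_ge i) (abs_nonneg _)
  have hw_pos := pos_of_mulVec_eq_smul hnn hconn (fun i => abs_nonneg (u i)) hSw hw0
  have hopp (i j : ι) (hij : S i j ≠ 0) : u i * u j < 0 := by
    have hsum : ∑ k, S i k * (|u i| * |u k| + u i * u k) = 0 := by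
      have hSw_apply : ∑ k, S i k * |u k| = M * |u i| := congrFun hSw i
      calc ∑ k, S i k * (|u i| * |u k| + u i * u k)
          = |u i| * ∑ k, S i k * |u k| + u i * ∑ k, S i k * u k := by
            simp only [Finset.mul_sum, ← Finset.sum_add_distrib]
            exact Finset.sum_congr rfl fun k _ => by ring
        _ = 0 := by rw [hSw_apply, hSu_apply, mul_comm M, ← mul_assoc, abs_mul_abs_self]; ring
    have hterm := (Finset.sum_eq_zero_iff_of_nonneg fun k _ => mul_nonneg (hnn i k)
      (by rw [← abs_mul]; exact neg_le_iff_add_nonneg'.1 (neg_abs_le _))).1 hsum j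
      (Finset.mem_univ j)
    rw [← abs_mul] at hterm
    have := (mul_eq_zero.1 hterm).resolve_left hij
    have hne : u i * u j ≠ 0 := mul_ne_zero (abs_pos.1 (hw_pos i)) (abs_pos.1 (hw_pos j))
    exact lt_of_le_of_ne (by linarith [abs_nonneg (u i * u j)]) hne
  refine ⟨{i | 0 < u i}, fun i j hij => by_contra fun h => ?_⟩
  rcases mul_neg_iff.1 (hopp i j h) with ⟨hi, hj⟩ | ⟨hi, hj⟩
  · exact hj.not_gt (hij.1 hi)
  · exact hi.not_gt (hij.2 hj)

theorem IsHermitian.isBipartite_iff_add_eq_zero (hS : S.IsHermitian) (hnn : ∀ i j, 0 ≤ S i j)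
    (hconn : ∀ i j, Relation.ReflTransGen (fun a b => S a b ≠ 0) i j) {m M : ℝ}
    (hm : IsLeast {l | HasEigenvalue (toEuclideanLin S) l} m)
    (hM : IsGreatest {l | HasEigenvalue (toEuclideanLin S) l} M) :
    S.IsBipartite ↔ m + M = 0 := by
  refine ⟨fun hB => ?_, fun h => ?_⟩
  · have h₁ := hm.2 (hB.hasEigenvalue_neg hM.1)
    have h₂ := hM.2 (hB.hasEigenvalue_neg hm.1)
    linarith
  · refine hS.isBipartite_of_hasEigenvalue_neg hnn hconn hM ?_
    simpa [eq_neg_of_add_eq_zero_left h] using hm.1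

end Matrix

section Dirichlet

open Matrix

variable {μ : V → V → ℝ} {Ω : Finset V}

variable (μ Ω) in
noncomputable def normAdj : Matrix Ω Ω ℝ :=
  of fun x y => μ x y / (√(deg μ x) * √(deg μ y))

lemma normAdj_isHermitian (hsymm : ∀ x y, μ x y = μ y x) : (normAdj μ Ω).IsHermitian :=
  IsHermitian.ext fun x y => by simp [normAdj, hsymm (x : V), mul_comm]

lemma normAdj_nonneg (hnn : ∀ x y, 0 ≤ μ x y) (x y : Ω) : 0 ≤ normAdj μ Ω x y :=
  div_nonneg (hnn x y) (by positivity)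

lemma normAdj_eq_zero_iff (hdeg : ∀ x, 0 < deg μ x) {x y : Ω} :
    normAdj μ Ω x y = 0 ↔ μ x y = 0 := by
  simp [normAdj, (Real.sqrt_pos.2 (hdeg x)).ne', (Real.sqrt_pos.2 (hdeg y)).ne']

lemma reflTransGen_normAdj (hdeg : ∀ x, 0 < deg μ x) (hconn : ConnectedOn μ Ω) (x y : Ω) :
    Relation.ReflTransGen (fun a b => normAdj μ Ω a b ≠ 0) x y := by
  suffices ∀ b, Relation.ReflTransGen (fun a b => a ∈ Ω ∧ b ∈ Ω ∧ μ a b ≠ 0) x b →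
      ∀ hb : b ∈ Ω, Relation.ReflTransGen (fun a b => normAdj μ Ω a b ≠ 0) x ⟨b, hb⟩ from
    this y (hconn x x.2 y y.2) y.2
  intro b hxb
  induction hxb with
  | refl => exact fun _ => .refl
  | tail _ hbc ih =>
    exact fun _ => (ih hbc.1).tail (by rw [Ne, normAdj_eq_zero_iff hdeg]; exact hbc.2.2)

lemma bipartiteOn_iff_isBipartite (hdeg : ∀ x, 0 < deg μ x) :
    BipartiteOn μ Ω ↔ (normAdj μ Ω).IsBipartite := by
  classical
  simp only [IsBipartite, normAdj_eq_zero_iff hdeg]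
  constructor
  · rintro ⟨U₁, U₂, -, hcover, hU₁, hU₂⟩
    refine ⟨{x | (x : V) ∈ U₁}, fun x y hxy => ?_⟩
    have hmem (z : Ω) : (z : V) ∈ U₁ ∨ (z : V) ∈ U₂ := by
      have : (z : V) ∈ (U₁ : Set V) ∪ U₂ := hcover ▸ Finset.mem_coe.2 z.2
      simpa using this
    by_cases hx : (x : V) ∈ U₁
    · exact hU₁ x hx y (hxy.1 hx)
    · exact hU₂ x ((hmem x).resolve_left hx) y ((hmem y).resolve_left (mt hxy.2 hx))
  · rintro ⟨U, hU⟩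
    refine ⟨Ω.filter fun x => ∃ h : x ∈ Ω, ⟨x, h⟩ ∈ U, Ω.filter fun x => ∃ h : x ∈ Ω, ⟨x, h⟩ ∉ U,
      Finset.disjoint_filter.2 fun x _ ⟨_, h₁⟩ ⟨_, h₂⟩ => h₂ h₁, ?_, ?_, ?_⟩
    · ext x
      simp only [Finset.coe_filter, Set.mem_union, Set.mem_ofPred_eq, Finset.mem_coe]
      tauto
    · simp only [Finset.mem_filter]
      rintro x ⟨hx, _, hxU⟩ y ⟨hy, _, hyU⟩
      exact hU ⟨x, hx⟩ ⟨y, hy⟩ (iff_of_true hxU hyU)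
    · simp only [Finset.mem_filter]
      rintro x ⟨hx, _, hxU⟩ y ⟨hy, _, hyU⟩
      exact hU ⟨x, hx⟩ ⟨y, hy⟩ (iff_of_false hxU hyU)

lemma dLap_eq_iff {f : V → ℝ} {l : ℝ} {x : V} (hx : 0 < deg μ x) :
    dLap μ Ω f x = l * f x ↔ ∑ y ∈ Ω, μ x y * f y = (1 - l) * deg μ x * f x := by
  rw [dLap]
  constructor <;> intro h
  · field_simp at h
    linarith
  · rw [h]
    field_simp
    ring

lemma normAdj_mulVec_apply (hdeg : ∀ x, 0 < deg μ x) (f : V → ℝ) (x : Ω) :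
    (normAdj μ Ω *ᵥ fun y : Ω => √(deg μ y) * f y) x = (∑ y ∈ Ω, μ x y * f y) / √(deg μ x) := by
  rw [Finset.sum_div, ← Finset.sum_coe_sort Ω]
  refine Finset.sum_congr rfl fun y _ => ?_
  have := (Real.sqrt_pos.2 (hdeg y)).ne'
  simp only [normAdj, of_apply]
  field_simp

lemma normAdj_mulVec_eq_smul_iff (hdeg : ∀ x, 0 < deg μ x) (f : V → ℝ) (l : ℝ) :
    (normAdj μ Ω *ᵥ fun y : Ω => √(deg μ y) * f y) = (1 - l) • (fun y : Ω => √(deg μ y) * f y) ↔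
      ∀ x ∈ Ω, dLap μ Ω f x = l * f x := by
  simp only [funext_iff, Subtype.forall, Pi.smul_apply, smul_eq_mul, normAdj_mulVec_apply hdeg]
  refine forall₂_congr fun x _ => ?_
  have hd := Real.mul_self_sqrt (hdeg x).le
  rw [dLap_eq_iff (hdeg x), div_eq_iff (Real.sqrt_pos.2 (hdeg x)).ne',
    show (1 - l) * (√(deg μ x) * f x) * √(deg μ x) = (1 - l) * deg μ x * f x by
      linear_combination (1 - l) * f x * hd]

variable [DecidableEq Ω]

lemma isDirEig_iff (hdeg : ∀ x, 0 < deg μ x) {l : ℝ} :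
    IsDirEig μ Ω l ↔ HasEigenvalue (toEuclideanLin (normAdj μ Ω)) (1 - l) := by
  have hsqrt (x : V) : √(deg μ x) ≠ 0 := (Real.sqrt_pos.2 (hdeg x)).ne'
  rw [hasEigenvalue_toEuclideanLin_iff]
  constructor
  · rintro ⟨f, ⟨x, hx, hfx⟩, -, hf⟩
    refine ⟨fun y : Ω => √(deg μ y) * f y, fun h => hfx ?_,
      (normAdj_mulVec_eq_smul_iff hdeg f l).2 hf⟩
    simpa [hsqrt] using congrFun h ⟨x, hx⟩
  · rintro ⟨u, hu, hSu⟩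
    classical
    set f : V → ℝ := fun x => if h : x ∈ Ω then u ⟨x, h⟩ / √(deg μ x) else 0
    have hfu : (fun y : Ω => √(deg μ y) * f y) = u := by
      funext y
      simp [f, y.2, mul_div_cancel₀ _ (hsqrt y)]
    obtain ⟨y, hy⟩ := Function.ne_iff.1 hu
    refine ⟨f, ⟨y, y.2, fun h => hy ?_⟩, fun x hx => dif_neg hx,
      (normAdj_mulVec_eq_smul_iff hdeg f l).1 (hfu ▸ hSu)⟩
    rw [← hfu]
    simp [h]

lemma isLeast_isDirEig (hdeg : ∀ x, 0 < deg μ x) {M : ℝ}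
    (hM : IsGreatest {l | HasEigenvalue (toEuclideanLin (normAdj μ Ω)) l} M) :
    IsLeast {l | IsDirEig μ Ω l} (1 - M) :=
  ⟨(isDirEig_iff hdeg).2 (by simpa using hM.1),
    fun l hl => by linarith [hM.2 ((isDirEig_iff hdeg).1 hl)]⟩

lemma isGreatest_isDirEig (hdeg : ∀ x, 0 < deg μ x) {m : ℝ}
    (hm : IsLeast {l | HasEigenvalue (toEuclideanLin (normAdj μ Ω)) l} m) :
    IsGreatest {l | IsDirEig μ Ω l} (1 - m) :=
  ⟨(isDirEig_iff hdeg).2 (by simpa using hm.1),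
    fun l hl => by linarith [hm.2 ((isDirEig_iff hdeg).1 hl)]⟩

end Dirichlet

theorem stmt2_general {V : Type*} (μ : V → V → ℝ) (hsymm : ∀ x y, μ x y = μ y x) (hnn : ∀ x y, 0 ≤ μ x y)
    (hdeg : ∀ x : V, 0 < deg μ x)
    (Ω : Finset V) (hconn : ConnectedOn μ Ω) (hcard : 2 ≤ Ω.card) :
    lam1 μ Ω + lamMax μ Ω = 2 ↔ BipartiteOn μ Ω := by
  classical
  have : Nonempty Ω := (Finset.card_pos.1 (by omega)).to_subtype
  have hS := normAdj_isHermitian (Ω := Ω) hsymm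
  have hm := (Matrix.isSymmetric_toEuclideanLin_iff.2 hS).isLeast_hasEigenvalue
  have hM := (Matrix.isSymmetric_toEuclideanLin_iff.2 hS).isGreatest_hasEigenvalue
  rw [lam1, lamMax, (isLeast_isDirEig hdeg hM).csInf_eq, (isGreatest_isDirEig hdeg hm).csSup_eq,
    bipartiteOn_iff_isBipartite hdeg,
    hS.isBipartite_iff_add_eq_zero (normAdj_nonneg hnn) (reflTransGen_normAdj hdeg hconn) hm hM]
  constructor <;> intro <;> linarith

theorem stmt2 {V : Type*} [Infinite V] (μ : V → V → ℝ) (hsymm : ∀ x y, μ x y = μ y x) (hnn : ∀ x y, 0 ≤ μ x y)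
    (hfin : ∀ x : V, (Function.support (μ x)).Finite) (hdeg : ∀ x : V, 0 < deg μ x)
    (hconnG : ∀ x y : V, Relation.ReflTransGen (fun a b => μ a b ≠ 0) x y)
    (Ω : Finset V) (hconn : ConnectedOn μ Ω) (hcard : 2 ≤ Ω.card) :
    lam1 μ Ω + lamMax μ Ω = 2 ↔ BipartiteOn μ Ω :=
  stmt2_general μ hsymm hnn hdeg Ω hconn hcard
end

section
/- For a finite connected subset Ω (#Ω≥2) of a weighted graph without self-loops, (1/2)(1 - h(Ω)) ≤ h̄(Ω). -/
open Finset

variable {V : Type*}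

section helpers

variable [DecidableEq V] {μ : V → V → ℝ}

lemma eSum_symm (hsymm : ∀ x y, μ x y = μ y x) (A B : Finset V) :
    eSum μ A B = eSum μ B A := by
  unfold eSum; rw [Finset.sum_comm]; simp_rw [hsymm]

lemma eSum_nonneg (hnn : ∀ x y, 0 ≤ μ x y) (A B : Finset V) : 0 ≤ eSum μ A B :=
  Finset.sum_nonneg fun _ _ => Finset.sum_nonneg fun _ _ => hnn _ _

lemma sum_le_deg (hnn : ∀ x y, 0 ≤ μ x y) (hfin : ∀ x : V, (Function.support (μ x)).Finite)
    (x : V) (A : Finset V) : ∑ y ∈ A, μ x y ≤ deg μ x := by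
  rw [deg, finsum_eq_sum _ (hfin x)]
  have h1 : ∑ y ∈ A, μ x y ≤ ∑ y ∈ A ∪ (hfin x).toFinset, μ x y :=
    Finset.sum_le_sum_of_subset_of_nonneg Finset.subset_union_left (fun i _ _ => hnn x i)
  have h2 : ∑ y ∈ A ∪ (hfin x).toFinset, μ x y = ∑ y ∈ (hfin x).toFinset, μ x y := by
    apply (Finset.sum_subset Finset.subset_union_right ?_).symm
    intro y _ hy
    by_contra h
    exact hy ((hfin x).mem_toFinset.mpr h)
  linarith

lemma eSum_le_vol (hnn : ∀ x y, 0 ≤ μ x y) (hfin : ∀ x : V, (Function.support (μ x)).Finite)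
    (A B : Finset V) : eSum μ A B ≤ vol μ A :=
  Finset.sum_le_sum fun x _ => sum_le_deg hnn hfin x B

lemma vol_pos (hdeg : ∀ x : V, 0 < deg μ x) {A : Finset V} (hA : A.Nonempty) : 0 < vol μ A :=
  Finset.sum_pos (fun x _ => hdeg x) hA

lemma vol_nonneg (hdeg : ∀ x : V, 0 < deg μ x) (A : Finset V) : 0 ≤ vol μ A :=
  Finset.sum_nonneg fun x _ => (hdeg x).le

lemma eSum_union_left {A B : Finset V} (h : Disjoint A B) (C : Finset V) :
    eSum μ (A ∪ B) C = eSum μ A C + eSum μ B C := Finset.sum_union h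

lemma eSum_singleton_left (x : V) (B : Finset V) :
    eSum μ {x} B = ∑ y ∈ B, μ x y := by simp [eSum]

end helpers


lemma maxcut [DecidableEq V] {μ : V → V → ℝ} (hsymm : ∀ x y, μ x y = μ y x)
    (hnn : ∀ x y, 0 ≤ μ x y) (hloop : ∀ x : V, μ x x = 0)
    (U : Finset V) (hpos : 0 < eSum μ U U) :
    ∃ S T : Finset V, S.Nonempty ∧ T.Nonempty ∧ Disjoint S T ∧ S ∪ T = U ∧
      eSum μ U U ≤ 4 * eSum μ S T := by
  obtain ⟨S, hSmem, hSmax⟩ := Finset.exists_max_image U.powerset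
    (fun S => eSum μ S (U \ S)) ⟨∅, Finset.empty_mem_powerset U⟩
  have hSΩ : S ⊆ U := Finset.mem_powerset.mp hSmem
  set T : Finset V := U \ S with hT
  have hdisj : Disjoint S T := Finset.disjoint_sdiff
  have hunion : S ∪ T = U := Finset.union_sdiff_of_subset hSΩ
  -- there is an edge inside U
  have hedge : ∃ x ∈ U, ∃ y ∈ U, 0 < μ x y := by
    by_contra h
    push_neg at h
    have : eSum μ U U = 0 := Finset.sum_eq_zero fun x hx =>
      Finset.sum_eq_zero fun y hy => le_antisymm (h x hx y hy) (hnn x y)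
    linarith
  obtain ⟨x₀, hx₀, y₀, hy₀, hxy₀⟩ := hedge
  have hxy_ne : x₀ ≠ y₀ := fun h => by rw [h, hloop] at hxy₀; linarith
  -- max cut value is positive
  have hcutpos : 0 < eSum μ S T := by
    have hmem : {x₀} ∈ U.powerset := Finset.mem_powerset.mpr (Finset.singleton_subset_iff.mpr hx₀)
    have h1 : eSum μ {x₀} (U \ {x₀}) ≤ eSum μ S T := hSmax {x₀} hmem
    have h2 : 0 < eSum μ {x₀} (U \ {x₀}) := by
      rw [eSum_singleton_left]
      have hy : y₀ ∈ U \ {x₀} := Finset.mem_sdiff.mpr ⟨hy₀, by simp [Ne.symm hxy_ne]⟩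
      have := Finset.single_le_sum (f := fun y => μ x₀ y) (fun i _ => hnn x₀ i) hy
      linarith
    linarith
  have hSne : S.Nonempty := by
    rcases S.eq_empty_or_nonempty with rfl | h
    · simp [eSum] at hcutpos
    · exact h
  have hTne : T.Nonempty := by
    rcases T.eq_empty_or_nonempty with heq | h
    · rw [heq] at hcutpos; simp [eSum] at hcutpos
    · exact h
  -- key: eSum {x} S ≤ eSum {x} T for x ∈ S
  have keyS : ∀ x ∈ S, eSum μ {x} S ≤ eSum μ {x} T := by
    intro x hx
    have hxΩ : x ∈ U := hSΩ hx
    have hS' : S.erase x ∈ U.powerset :=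
      Finset.mem_powerset.mpr ((Finset.erase_subset x S).trans hSΩ)
    have hmax := hSmax (S.erase x) hS'
    have hΩerase : U \ S.erase x = insert x T := by
      rw [hT]
      ext z
      simp only [Finset.mem_sdiff, Finset.mem_erase, Finset.mem_insert]
      constructor
      · rintro ⟨hz, hz2⟩
        by_cases hzx : z = x
        · left; exact hzx
        · right; exact ⟨hz, fun hzS => hz2 ⟨hzx, hzS⟩⟩
      · rintro (rfl | ⟨hz, hz2⟩)
        · exact ⟨hxΩ, fun h => h.1 rfl⟩
        · exact ⟨hz, fun h => hz2 h.2⟩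
    rw [hΩerase] at hmax
    have hxT : x ∉ T := fun h => (Finset.mem_sdiff.mp h).2 hx
    have split1 : eSum μ (S.erase x) (insert x T) =
        eSum μ (S.erase x) T + ∑ z ∈ S.erase x, μ z x := by
      unfold eSum
      rw [← Finset.sum_add_distrib]
      congr 1
      ext z
      rw [Finset.sum_insert hxT, add_comm]
    have split2 : eSum μ S T = eSum μ (S.erase x) T + eSum μ {x} T := by
      rw [eSum_singleton_left]
      exact (Finset.sum_erase_add S (fun z => ∑ y ∈ T, μ z y) hx).symm
    have key : ∑ z ∈ S.erase x, μ z x ≤ eSum μ {x} T := by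
      rw [split1] at hmax; rw [split2] at hmax; linarith
    have : eSum μ {x} S = ∑ z ∈ S.erase x, μ z x := by
      rw [eSum_singleton_left]
      have h0 := Finset.sum_erase_add S (fun y => μ x y) hx
      simp only [hloop, add_zero] at h0
      rw [← h0]
      exact Finset.sum_congr rfl fun z _ => hsymm x z
    linarith
  have keyT : ∀ x ∈ T, eSum μ {x} T ≤ eSum μ {x} S := by
    intro x hx
    have hxΩ : x ∈ U := (Finset.mem_sdiff.mp hx).1
    have hxS : x ∉ S := (Finset.mem_sdiff.mp hx).2
    have hS' : insert x S ∈ U.powerset :=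
      Finset.mem_powerset.mpr (Finset.insert_subset hxΩ hSΩ)
    have hmax := hSmax (insert x S) hS'
    have hΩins : U \ insert x S = T.erase x := by
      rw [hT]
      ext z
      simp only [Finset.mem_sdiff, Finset.mem_insert, Finset.mem_erase]
      tauto
    rw [hΩins] at hmax
    have split1 : eSum μ (insert x S) (T.erase x) =
        eSum μ S (T.erase x) + eSum μ {x} (T.erase x) := by
      rw [eSum, Finset.sum_insert hxS, eSum_singleton_left, add_comm]; rfl
    have split2 : eSum μ S T = eSum μ S (T.erase x) + ∑ z ∈ S, μ z x := by
      unfold eSum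
      rw [← Finset.sum_add_distrib]
      apply Finset.sum_congr rfl
      intro z _
      exact (Finset.sum_erase_add T (fun y => μ z y) hx).symm
    have h1 : eSum μ {x} (T.erase x) ≤ ∑ z ∈ S, μ z x := by
      rw [split1] at hmax; rw [split2] at hmax; linarith
    have h2 : eSum μ {x} T = eSum μ {x} (T.erase x) := by
      rw [eSum_singleton_left, eSum_singleton_left]
      have h0 := Finset.sum_erase_add T (fun y => μ x y) hx
      simp only [hloop, add_zero] at h0
      exact h0.symm
    have h3 : eSum μ {x} S = ∑ z ∈ S, μ z x := by
      rw [eSum_singleton_left]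
      exact Finset.sum_congr rfl fun z _ => hsymm x z
    linarith
  -- sum up
  have eSum_split_left : ∀ (A B : Finset V), eSum μ A B = ∑ x ∈ A, eSum μ {x} B := by
    intro A B
    unfold eSum
    simp [Finset.sum_singleton]
  have hSS : eSum μ S S ≤ eSum μ S T := by
    rw [eSum_split_left S S, eSum_split_left S T]
    exact Finset.sum_le_sum fun x hx => keyS x hx
  have hTT : eSum μ T T ≤ eSum μ S T := by
    rw [eSum_split_left T T]
    calc ∑ x ∈ T, eSum μ {x} T ≤ ∑ x ∈ T, eSum μ {x} S :=
          Finset.sum_le_sum fun x hx => keyT x hx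
      _ = eSum μ T S := (eSum_split_left T S).symm
      _ = eSum μ S T := eSum_symm hsymm T S
  have hΩsplit : eSum μ U U = eSum μ S S + eSum μ S T + eSum μ T S + eSum μ T T := by
    rw [← hunion]
    unfold eSum
    rw [Finset.sum_union hdisj]
    simp only [Finset.sum_union hdisj, Finset.sum_add_distrib]
    ring
  have hTS : eSum μ T S = eSum μ S T := eSum_symm hsymm T S
  exact ⟨S, T, hSne, hTne, hdisj, hunion, by rw [hΩsplit, hTS]; linarith⟩

theorem stmt7 {V : Type*} [Infinite V] (μ : V → V → ℝ) (hsymm : ∀ x y, μ x y = μ y x) (hnn : ∀ x y, 0 ≤ μ x y)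
    (hfin : ∀ x : V, (Function.support (μ x)).Finite) (hdeg : ∀ x : V, 0 < deg μ x)
    (hconnG : ∀ x y : V, Relation.ReflTransGen (fun a b => μ a b ≠ 0) x y)
    (Ω : Finset V) (hconn : ConnectedOn μ Ω) (hcard : 2 ≤ Ω.card) (hloop : ∀ x : V, μ x x = 0) :
    (1 - cheeger μ Ω) / 2 ≤ dualCheeger μ Ω := by
  classical
  have hΩne : Ω.Nonempty := Finset.card_pos.mp (by omega)
  have hvolΩ : 0 < vol μ Ω := vol_pos hdeg hΩne
  have hbdd : BddAbove {r : ℝ | ∃ V₁ V₂ : Finset V, V₁.Nonempty ∧ V₂.Nonempty ∧ Disjoint V₁ V₂ ∧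
      V₁ ⊆ Ω ∧ V₂ ⊆ Ω ∧ r = 2 * eSum μ V₁ V₂ / (vol μ V₁ + vol μ V₂)} := by
    refine ⟨2, ?_⟩
    rintro r ⟨V₁, V₂, h1, h2, _, _, _, rfl⟩
    have hv1 : 0 < vol μ V₁ := vol_pos hdeg h1
    have hv2 : 0 < vol μ V₂ := vol_pos hdeg h2
    have he : eSum μ V₁ V₂ ≤ vol μ V₁ := eSum_le_vol hnn hfin V₁ V₂
    rw [div_le_iff₀ (by linarith)]
    linarith
  -- dualCheeger is nonnegative: there is at least one admissible pair
  obtain ⟨a, ha, b, hb, hab⟩ := Finset.one_lt_card.mp hcard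
  obtain ⟨x₀, hx₀, y₀, hy₀, hxy₀⟩ : ∃ x ∈ Ω, ∃ y ∈ Ω, μ x y ≠ 0 := by
    rcases (Relation.ReflTransGen.cases_head (hconn a ha b hb)) with heq | ⟨c, ⟨h1, h2, h3⟩, _⟩
    · exact absurd heq hab
    · exact ⟨a, h1, c, h2, h3⟩
  have hxy_ne : x₀ ≠ y₀ := fun h => hxy₀ (h ▸ hloop x₀)
  have hdualnn : 0 ≤ dualCheeger μ Ω := by
    have hmem : 2 * eSum μ {x₀} {y₀} / (vol μ {x₀} + vol μ {y₀}) ∈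
        {r : ℝ | ∃ V₁ V₂ : Finset V, V₁.Nonempty ∧ V₂.Nonempty ∧ Disjoint V₁ V₂ ∧
          V₁ ⊆ Ω ∧ V₂ ⊆ Ω ∧ r = 2 * eSum μ V₁ V₂ / (vol μ V₁ + vol μ V₂)} :=
      ⟨{x₀}, {y₀}, Finset.singleton_nonempty _, Finset.singleton_nonempty _,
        Finset.disjoint_singleton.mpr hxy_ne,
        Finset.singleton_subset_iff.mpr hx₀, Finset.singleton_subset_iff.mpr hy₀, rfl⟩
    have hle : 2 * eSum μ {x₀} {y₀} / (vol μ {x₀} + vol μ {y₀}) ≤ dualCheeger μ Ω :=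
      le_csSup hbdd hmem
    have h1 : 0 ≤ eSum μ {x₀} {y₀} := eSum_nonneg hnn _ _
    have h2 : 0 < vol μ {x₀} := vol_pos hdeg (Finset.singleton_nonempty _)
    have h3 : 0 < vol μ {y₀} := vol_pos hdeg (Finset.singleton_nonempty _)
    have : 0 ≤ 2 * eSum μ {x₀} {y₀} / (vol μ {x₀} + vol μ {y₀}) := by positivity
    linarith
  -- key inequality for every admissible U
  have key : ∀ U : Finset V, U.Nonempty → U ⊆ Ω →
      eSum μ U U / vol μ U ≤ 2 * dualCheeger μ Ω := by
    intro U hUne hUΩ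
    have hvolU : 0 < vol μ U := vol_pos hdeg hUne
    rcases le_or_gt (eSum μ U U) 0 with h0 | hpos
    · have h0' : eSum μ U U = 0 := le_antisymm h0 (eSum_nonneg hnn U U)
      rw [h0', zero_div]
      linarith
    · obtain ⟨S, T, hSne, hTne, hdisj, hunion, hle4⟩ := maxcut hsymm hnn hloop U hpos
      have hvolsplit : vol μ S + vol μ T = vol μ U := by
        rw [← hunion]; exact (Finset.sum_union hdisj).symm
      have hmem : 2 * eSum μ S T / (vol μ S + vol μ T) ∈
          {r : ℝ | ∃ V₁ V₂ : Finset V, V₁.Nonempty ∧ V₂.Nonempty ∧ Disjoint V₁ V₂ ∧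
            V₁ ⊆ Ω ∧ V₂ ⊆ Ω ∧ r = 2 * eSum μ V₁ V₂ / (vol μ V₁ + vol μ V₂)} :=
        ⟨S, T, hSne, hTne, hdisj,
          (Finset.subset_union_left.trans (hunion ▸ hUΩ)),
          (Finset.subset_union_right.trans (hunion ▸ hUΩ)), rfl⟩
      have hdual : 2 * eSum μ S T / (vol μ S + vol μ T) ≤ dualCheeger μ Ω :=
        le_csSup hbdd hmem
      rw [hvolsplit] at hdual
      rw [div_le_iff₀ hvolU]
      rw [div_le_iff₀ hvolU] at hdual
      nlinarith
  -- cheeger lower bound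
  have hch : 1 - 2 * dualCheeger μ Ω ≤ cheeger μ Ω := by
    rw [cheeger]
    have hne : {r : ℝ | ∃ U : Finset V, U.Nonempty ∧ U ⊆ Ω ∧ r = bdry μ U / vol μ U}.Nonempty :=
      ⟨bdry μ Ω / vol μ Ω, Ω, hΩne, Finset.Subset.refl Ω, rfl⟩
    apply le_csInf hne
    rintro r ⟨U, hUne, hUΩ, rfl⟩
    have hvolU : 0 < vol μ U := vol_pos hdeg hUne
    have hk := key U hUne hUΩ
    have : bdry μ U / vol μ U = 1 - eSum μ U U / vol μ U := by
      rw [bdry, sub_div, div_self (ne_of_gt hvolU)]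
    rw [this]
    linarith
  linarith
end
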